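/- Let K be a field and let (V, R), (W, S) be quadratic data over K. Let f : V → W be a K-linear map and let d ∈ V* ⊗ W be the tensor corresponding to f under the canonical isomorphism Hom_K(V, W) ≅ V* ⊗ W (valid since V is finite-dimensional). Then f is a morphism of quadratic data (i.e. (f ⊗ f)(R) ⊆ S) if and only if S₍₂₃₎(d ⊗ d) lies in the subspace R^⊥ ⊗ (W ⊗ W) + (V* ⊗ V*) ⊗ S of (V* ⊗ V*) ⊗ (W ⊗ W). -/

import Mathlib

open TensorProduct Module

noncomputable section

/-- The image of `R ⊗ S` inside `A ⊗[K] B`, for subspaces `R ⊆ A`, `S ⊆ B`. -/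
def subTensor (K : Type) [Field K] {A B : Type} [AddCommMonoid A] [AddCommMonoid B]
    [Module K A] [Module K B] (R : Submodule K A) (S : Submodule K B) :
    Submodule K (A ⊗[K] B) :=
  LinearMap.range (TensorProduct.map R.subtype S.subtype)

/-- The relation space `S₍₂₃₎(R ⊗ S)` of the black product of the quadratic data
`(V, R)` and `(W, S)`. -/
def blackRel (K : Type) [Field K] {V W : Type} [AddCommMonoid V] [AddCommMonoid W]
    [Module K V] [Module K W] (R : Submodule K (V ⊗[K] V)) (S : Submodule K (W ⊗[K] W)) :
    Submodule K ((V ⊗[K] W) ⊗[K] (V ⊗[K] W)) :=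
  Submodule.map (TensorProduct.tensorTensorTensorComm K V V W W).toLinearMap
    (subTensor K R S)

/-- The relation space `S₍₂₃₎(R ⊗ (W ⊗ W) + (V ⊗ V) ⊗ S)` of the white product of the
quadratic data `(V, R)` and `(W, S)`. -/
def whiteRel (K : Type) [Field K] {V W : Type} [AddCommMonoid V] [AddCommMonoid W]
    [Module K V] [Module K W] (R : Submodule K (V ⊗[K] V)) (S : Submodule K (W ⊗[K] W)) :
    Submodule K ((V ⊗[K] W) ⊗[K] (V ⊗[K] W)) :=
  Submodule.map (TensorProduct.tensorTensorTensorComm K V V W W).toLinearMap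
    (subTensor K R (⊤ : Submodule K (W ⊗[K] W)) ⊔ subTensor K (⊤ : Submodule K (V ⊗[K] V)) S)

/-- The annihilator `R^⊥ ⊆ V* ⊗ V*` of a subspace `R ⊆ V ⊗ V`, under the canonical
pairing of `V* ⊗ V*` with `V ⊗ V`. -/
def annRel (K : Type) [Field K] {V : Type} [AddCommMonoid V] [Module K V]
    (R : Submodule K (V ⊗[K] V)) :
    Submodule K (Module.Dual K V ⊗[K] Module.Dual K V) :=
  Submodule.comap (TensorProduct.dualDistrib K V V) R.dualAnnihilator

/-- `f` is a morphism of quadratic data `(V, R) → (W, S)`:  `(f ⊗ f)(R) ⊆ S`. -/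
def IsQuadMor (K : Type) [Field K] {V W : Type} [AddCommMonoid V] [AddCommMonoid W]
    [Module K V] [Module K W] (R : Submodule K (V ⊗[K] V)) (S : Submodule K (W ⊗[K] W))
    (f : V →ₗ[K] W) : Prop :=
  Submodule.map (TensorProduct.map f f) R ≤ S

/-!
`R^⊥ ⊗ (W ⊗ W) + (V* ⊗ V*) ⊗ S` is the kernel of `ρ ⊗ π`, where `ρ : V* ⊗ V* ≅ (V ⊗ V)* → R*`
is restriction and `π : W ⊗ W → (W ⊗ W)/S` is the quotient map (right exactness of `⊗`, both
maps being onto). Under `Hom(U, M) ≅ U* ⊗ M`, applying `ρ ⊗ π` to the tensor of `g` gives the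
tensor of `π ∘ g ∘ (R ↪ V ⊗ V)`, and `S₍₂₃₎(d ⊗ d)` is the tensor of `f ⊗ f`. So the membership
says `π ∘ (f ⊗ f)` vanishes on `R`.
-/

open LinearMap

lemma subTensor_eq_map₂ {K : Type} [Field K] {A B : Type} [AddCommMonoid A] [AddCommMonoid B]
    [Module K A] [Module K B] (P : Submodule K A) (Q : Submodule K B) :
    subTensor K P Q = Submodule.map₂ (TensorProduct.mk K A B) P Q :=
  range_mapIncl P Q

lemma ker_map_mkQ_eq_subTensor_sup {K : Type} [Field K] {N P M : Type} [AddCommGroup N]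
    [AddCommGroup P] [AddCommGroup M] [Module K N] [Module K P] [Module K M]
    (g : N →ₗ[K] P) (hg : Function.Surjective g) (S : Submodule K M) :
    ker (TensorProduct.map g S.mkQ) = subTensor K (ker g) ⊤ ⊔ subTensor K ⊤ S := by
  rw [TensorProduct.map_ker g.exact_subtype_ker_map hg (exact_subtype_mkQ S) S.mkQ_surjective,
    sup_comm]
  simp [subTensor_eq_map₂, lTensor, rTensor, range_map]

lemma dualTensorHom_tensorTensorTensorComm {R M N P Q : Type} [CommSemiring R]
    [AddCommMonoid M] [AddCommMonoid N] [AddCommMonoid P] [AddCommMonoid Q]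
    [Module R M] [Module R N] [Module R P] [Module R Q]
    (d : Dual R M ⊗[R] P) (d' : Dual R N ⊗[R] Q) :
    dualTensorHom R (M ⊗[R] N) (P ⊗[R] Q)
        (TensorProduct.map (dualDistrib R M N) LinearMap.id
          (tensorTensorTensorComm R (Dual R M) P (Dual R N) Q (d ⊗ₜ d'))) =
      TensorProduct.map (dualTensorHom R M P d) (dualTensorHom R N Q d') := by
  induction d using TensorProduct.induction_on with
  | zero => simp
  | add s t hs ht => simp only [add_tmul, map_add, hs, ht, TensorProduct.map_add_left]
  | tmul φ p =>
    induction d' using TensorProduct.induction_on with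
    | zero => simp
    | add s t hs ht => simp only [tmul_add, map_add, hs, ht, TensorProduct.map_add_right]
    | tmul ψ q => simp [map_dualTensorHom]

lemma Submodule.map_dualTensorHom_le_iff {K U M : Type} [Field K] [AddCommGroup U]
    [AddCommGroup M] [Module K U] [Module K M] [FiniteDimensional K U]
    (R : Submodule K U) (S : Submodule K M) (t : Dual K U ⊗[K] M) :
    R.map (dualTensorHom K U M t) ≤ S ↔ TensorProduct.map R.dualRestrict S.mkQ t = 0 := by
  have hnat : dualTensorHom K R (M ⧸ S) (TensorProduct.map R.dualRestrict S.mkQ t) =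
      S.mkQ ∘ₗ dualTensorHom K U M t ∘ₗ R.subtype := by
    rw [← lTensor_comp_rTensor, ← comp_apply, ← comp_assoc, dualTensorHom_comp_lTensor,
      comp_assoc, dualRestrict_def, dualTensorHom_comp_rTensor_dualMap]
    rfl
  rw [← (dualTensorHom_bijective (R := K) (M := R) (N := M ⧸ S)).1.eq_iff, map_zero, hnat,
    ← comp_assoc, ← le_ker_iff_comp_subtype_eq_zero, ker_comp, S.ker_mkQ, map_le_iff_le_comap]

theorem quadMor_iff_tensor_relation_general (K : Type) [Field K]
    (V W : Type) [AddCommGroup V] [AddCommGroup W] [Module K V] [Module K W] [FiniteDimensional K V]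
    (R : Submodule K (V ⊗[K] V)) (S : Submodule K (W ⊗[K] W))
    (f : V →ₗ[K] W) (d : Module.Dual K V ⊗[K] W)
    (hd : dualTensorHomEquiv K V W d = f) :
    IsQuadMor K R S f ↔
      TensorProduct.tensorTensorTensorComm K (Module.Dual K V) W (Module.Dual K V) W
          (d ⊗ₜ[K] d) ∈
        subTensor K (annRel K R) (⊤ : Submodule K (W ⊗[K] W)) ⊔
          subTensor K (⊤ : Submodule K (Module.Dual K V ⊗[K] Module.Dual K V)) S := by
  have hρ_ker : ker (R.dualRestrict ∘ₗ dualDistrib K V V) = annRel K R := by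
    rw [ker_comp, Submodule.dualRestrict_ker_eq_dualAnnihilator]
    rfl
  have hρ_surj : Function.Surjective (R.dualRestrict ∘ₗ dualDistrib K V V) :=
    Subspace.dualRestrict_surjective.comp (dualDistribEquiv K V V).surjective
  have hff : dualTensorHom K (V ⊗[K] V) (W ⊗[K] W)
      (TensorProduct.map (dualDistrib K V V) LinearMap.id
        (tensorTensorTensorComm K (Dual K V) W (Dual K V) W (d ⊗ₜ d))) =
      TensorProduct.map f f := by
    rw [dualTensorHom_tensorTensorTensorComm, ← hd]
    rfl
  rw [IsQuadMor, ← hff, Submodule.map_dualTensorHom_le_iff, TensorProduct.map_map, comp_id,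
    ← mem_ker, ker_map_mkQ_eq_subTensor_sup (N := Dual K V ⊗[K] Dual K V) (P := Dual K R) _
      hρ_surj, hρ_ker]

/-- `f : (V,R) → (W,S)` is a morphism of quadratic data iff the corresponding tensor
`d ∈ V* ⊗ W` satisfies `S₍₂₃₎(d ⊗ d) ∈ R^⊥ ⊗ (W ⊗ W) + (V* ⊗ V*) ⊗ S`. -/
theorem quadMor_iff_tensor_relation (K : Type) [Field K]
    (V W : Type) [AddCommGroup V] [AddCommGroup W] [Module K V] [Module K W] [FiniteDimensional K V] [FiniteDimensional K W]
    (R : Submodule K (V ⊗[K] V)) (S : Submodule K (W ⊗[K] W))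
    (f : V →ₗ[K] W) (d : Module.Dual K V ⊗[K] W)
    (hd : dualTensorHomEquiv K V W d = f) :
    IsQuadMor K R S f ↔
      TensorProduct.tensorTensorTensorComm K (Module.Dual K V) W (Module.Dual K V) W
          (d ⊗ₜ[K] d) ∈
        subTensor K (annRel K R) (⊤ : Submodule K (W ⊗[K] W)) ⊔
          subTensor K (⊤ : Submodule K (Module.Dual K V ⊗[K] Module.Dual K V)) S :=
  quadMor_iff_tensor_relation_general K V W R S f d hd
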